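/- For an integer m ≥ 2 and the indicial polynomial ψ(λ) := λ(λ+1)⋯(λ+m−2) − m!, one has ψ″(2) = m!·[(H_m − 1)² − (H_m^{(2)} − 1)], where H_m = ∑_{j=1}^m 1/j and H_m^{(2)} = ∑_{j=1}^m 1/j². -/

import Mathlib

/-!
Writing `P(λ) = ∏_{k<m-1} (λ + k)`, logarithmic differentiation gives
`P' = P · ∑ 1/(λ+k)` and `P'' = P · ((∑ 1/(λ+k))² - ∑ 1/(λ+k)²)` wherever no factor vanishes.
At `λ = 2` the factors are `2, 3, …, m`, so `P(2) = m!` and the two sums are `H_m - 1` and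
`H_m^{(2)} - 1`.
-/

open Polynomial Finset

section LogDerivative

variable {ι K : Type*} [Field K]

theorem eval_derivative_prod_X_add_C (s : Finset ι) (a : ι → K) {x : K}
    (hx : ∀ i ∈ s, x + a i ≠ 0) :
    (derivative (∏ i ∈ s, (X + C (a i)))).eval x
      = (∏ i ∈ s, (x + a i)) * ∑ i ∈ s, (x + a i)⁻¹ := by
  classical
  induction s using Finset.induction_on with
  | empty => simp
  | insert j s hj ih =>
    have hj0 : x + a j ≠ 0 := hx j (mem_insert_self j s)
    rw [prod_insert hj, derivative_mul, prod_insert hj, sum_insert hj]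
    simp only [derivative_add, derivative_X, derivative_C, add_zero, one_mul, eval_add,
      eval_mul, eval_X, eval_C, eval_prod, ih fun i hi => hx i (mem_insert_of_mem hi)]
    field_simp

theorem eval_derivative_derivative_prod_X_add_C (s : Finset ι) (a : ι → K) {x : K}
    (hx : ∀ i ∈ s, x + a i ≠ 0) :
    (derivative (derivative (∏ i ∈ s, (X + C (a i))))).eval x
      = (∏ i ∈ s, (x + a i)) * ((∑ i ∈ s, (x + a i)⁻¹) ^ 2 - ∑ i ∈ s, ((x + a i) ^ 2)⁻¹) := by
  classical
  induction s using Finset.induction_on with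
  | empty => simp
  | insert j s hj ih =>
    have hj0 : x + a j ≠ 0 := hx j (mem_insert_self j s)
    have hs : ∀ i ∈ s, x + a i ≠ 0 := fun i hi => hx i (mem_insert_of_mem hi)
    rw [prod_insert hj, derivative_mul, derivative_add, prod_insert hj, sum_insert hj,
      sum_insert hj]
    simp only [derivative_X, derivative_C, add_zero, one_mul, derivative_mul, derivative_add,
      eval_add, eval_mul, eval_X, eval_C, ih hs,
      eval_derivative_prod_X_add_C s a hs]
    field_simp
    ring

end LogDerivative

theorem deriv_deriv_polynomial_eval {𝕜 : Type*} [NontriviallyNormedField 𝕜] (p : 𝕜[X]) (x : 𝕜) :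
    deriv (deriv fun y => p.eval y) x = p.derivative.derivative.eval x := by
  have h : (deriv fun y => p.eval y) = fun y => p.derivative.eval y :=
    funext fun y => Polynomial.deriv p (x := y)
  rw [h, Polynomial.deriv]

theorem prod_range_two_add_eq_factorial (n : ℕ) :
    ∏ k ∈ range n, ((2 : ℝ) + k) = (n + 1).factorial := by
  have h := Nat.factorial_mul_ascFactorial 1 n
  rw [Nat.ascFactorial_eq_prod_range, Nat.factorial_one, one_mul, add_comm 1 n] at h
  exact_mod_cast h

theorem sum_Icc_one_succ_eq_add_sum_range {M : Type*} [AddCommMonoid M] (f : ℕ → M) (n : ℕ) :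
    ∑ j ∈ Icc 1 (n + 1), f j = f 1 + ∑ k ∈ range n, f (k + 2) := by
  rw [← Ico_add_one_right_eq_Icc, sum_Ico_eq_sum_range, Nat.add_sub_cancel, sum_range_succ',
    add_comm]
  simp only [add_comm 1, add_assoc, one_add_one_eq_two]

theorem stmt_6 (m : ℕ) (hm : 2 ≤ m) :
    deriv (deriv (fun lam : ℝ => (∏ k ∈ Finset.range (m-1), (lam + k)) - m.factorial)) 2
      = m.factorial * (((∑ j ∈ Finset.Icc 1 m, (1:ℝ)/j) - 1)^2
          - ((∑ j ∈ Finset.Icc 1 m, (1:ℝ)/j^2) - 1)) := by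
  obtain ⟨n, rfl⟩ : ∃ n, m = n + 1 := ⟨m - 1, by omega⟩
  have hfun : (fun lam : ℝ => (∏ k ∈ range (n + 1 - 1), (lam + k)) - (n + 1).factorial)
      = fun lam => (∏ k ∈ range n, (X + C (k : ℝ)) - C ((n + 1).factorial : ℝ)).eval lam := by
    funext lam
    simp [eval_prod]
  have hpos : ∀ k ∈ range n, (2 : ℝ) + k ≠ 0 := fun k _ => by positivity
  rw [hfun, deriv_deriv_polynomial_eval, derivative_sub, derivative_C, sub_zero,
    eval_derivative_derivative_prod_X_add_C _ _ hpos,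
    prod_range_two_add_eq_factorial, sum_Icc_one_succ_eq_add_sum_range,
    sum_Icc_one_succ_eq_add_sum_range]
  push_cast
  norm_num [add_comm (2 : ℝ)]
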